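/- Let D1 and D2 be coherent sets of desirable gambles on the nonempty sets X1 and X2 respectively, and let 𝔅_1 ⊆ P_∅(X1), 𝔅_2 ⊆ P_∅(X2). Then D1 ⊗ D2 is an independent product of D1 and D2: it is a coherent set of desirable gambles on X1×X2 that is epistemically independent and satisfies marg_1(D1⊗D2) = D1 and marg_2(D1⊗D2) = D2. -/

import Mathlib

open scoped BigOperators

namespace IPaper

variable {X : Type*}

/-- A gamble on `X`: a bounded real-valued function. -/
def IsGamble (f : X → ℝ) : Prop := ∃ M : ℝ, ∀ x, |f x| ≤ M

/-- The indicator gamble of an event. -/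
noncomputable def ind (B : Set X) : X → ℝ := Set.indicator B 1

/-- The set `G_{>0}(X)` of nonnegative nonzero gambles. -/
def Gpos (X : Type*) : Set (X → ℝ) := {f | IsGamble f ∧ 0 ≤ f ∧ f ≠ 0}

/-- A coherent set of desirable gambles. -/
structure CoherentSDG (D : Set (X → ℝ)) : Prop where
  subset_gambles : ∀ f ∈ D, IsGamble f
  d1 : ∀ f : X → ℝ, IsGamble f → 0 ≤ f → f ≠ 0 → f ∈ D
  d2 : ∀ f ∈ D, ∀ l : ℝ, 0 < l → l • f ∈ D
  d3 : ∀ f ∈ D, ∀ g ∈ D, f + g ∈ D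
  d4 : ∀ f : X → ℝ, f ≤ 0 → f ∉ D

/-- `posi A`: positive linear hull of `A`. -/
def posi (A : Set (X → ℝ)) : Set (X → ℝ) :=
  {g | ∃ (n : ℕ) (l : Fin (n + 1) → ℝ) (h : Fin (n + 1) → X → ℝ),
    (∀ i, 0 < l i) ∧ (∀ i, h i ∈ A) ∧ g = ∑ i, l i • h i}

/-- `E(A) := posi (A ∪ G_{>0}(X))`. -/
def natExtSet (A : Set (X → ℝ)) : Set (X → ℝ) := posi (A ∪ Gpos X)

/-- `C(X)`: all pairs of a gamble and a nonempty event. -/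
def domC (X : Type*) : Set ((X → ℝ) × Set X) := {p | IsGamble p.1 ∧ p.2.Nonempty}

/-- The conditional lower prevision `lp_D` derived from a set of gambles `D`. -/
noncomputable def lpOf (D : Set (X → ℝ)) (f : X → ℝ) (B : Set X) : EReal :=
  sSup (Real.toEReal '' {m : ℝ | (fun x => (f x - m) * ind B x) ∈ D})

/-- Coherence (Williams) of a conditional lower prevision on a domain `C`. -/
def Coherent (C : Set ((X → ℝ) × Set X)) (lp : (X → ℝ) → Set X → EReal) : Prop :=
  ∃ D : Set (X → ℝ), CoherentSDG D ∧ ∀ p ∈ C, lp p.1 p.2 = lpOf D p.1 p.2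

/-- The set `A_lp`. -/
def Alp (C : Set ((X → ℝ) × Set X)) (lp : (X → ℝ) → Set X → EReal) : Set (X → ℝ) :=
  {g | ∃ p ∈ C, ∃ m : ℝ, (m : EReal) < lp p.1 p.2 ∧ g = fun x => (p.1 x - m) * ind p.2 x}

/-- `E(lp) := E(A_lp)`. -/
def ElpSet (C : Set ((X → ℝ) × Set X)) (lp : (X → ℝ) → Set X → EReal) : Set (X → ℝ) :=
  natExtSet (Alp C lp)

/-- The natural extension of `lp` to all of `C(X)`. -/
noncomputable def natExtLP (C : Set ((X → ℝ) × Set X)) (lp : (X → ℝ) → Set X → EReal)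
    (f : X → ℝ) (B : Set X) : EReal :=
  lpOf (ElpSet C lp) f B

/-- Simple `B`-measurable gamble. -/
def SimpleMeas (Bfam : Set (Set X)) (g : X → ℝ) : Prop :=
  ∃ (c0 : ℝ) (n : ℕ) (c : Fin n → ℝ) (Bs : Fin n → Set X),
    0 ≤ c0 ∧ (∀ i, 0 ≤ c i) ∧ (∀ i, Bs i ∈ Bfam) ∧
    g = fun x => c0 + ∑ i, c i * ind (Bs i) x

/-- `B`-measurable gamble: uniform limit of nonnegative simple `B`-measurable gambles. -/
def BMeas (Bfam : Set (Set X)) (g : X → ℝ) : Prop :=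
  ∃ gs : ℕ → X → ℝ, (∀ n, 0 ≤ gs n ∧ SimpleMeas Bfam (gs n)) ∧
    TendstoUniformly gs g Filter.atTop

/-- A conditional linear prevision on `C(X)`: a coherent self-conjugate conditional
lower prevision on the full domain. -/
def CondLinPrev (P : (X → ℝ) → Set X → EReal) : Prop :=
  Coherent (domC X) P ∧ ∀ p ∈ domC X, P p.1 p.2 = -P (-p.1) p.2

section Product

variable {X1 X2 : Type*}

/-- `A_{1→2}`. -/
def A12 (D2 : Set (X2 → ℝ)) (F1 : Set (Set X1)) : Set (X1 × X2 → ℝ) :=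
  {g | ∃ f2 ∈ D2, ∃ B1 ∈ F1 ∪ {Set.univ}, g = fun p => f2 p.2 * ind B1 p.1}

/-- `A_{2→1}`. -/
def A21 (D1 : Set (X1 → ℝ)) (F2 : Set (Set X2)) : Set (X1 × X2 → ℝ) :=
  {g | ∃ f1 ∈ D1, ∃ B2 ∈ F2 ∪ {Set.univ}, g = fun p => f1 p.1 * ind B2 p.2}

/-- `D1 ⊗ D2`, relative to the families of conditioning events `F1`, `F2`. -/
def indNatExt (D1 : Set (X1 → ℝ)) (D2 : Set (X2 → ℝ))
    (F1 : Set (Set X1)) (F2 : Set (Set X2)) : Set (X1 × X2 → ℝ) :=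
  natExtSet (A12 D2 F1 ∪ A21 D1 F2)

/-- `marg_1(D)`. -/
def marg1 (D : Set (X1 × X2 → ℝ)) : Set (X1 → ℝ) :=
  {f | IsGamble f ∧ (fun p : X1 × X2 => f p.1) ∈ D}

/-- `marg_2(D)`. -/
def marg2 (D : Set (X1 × X2 → ℝ)) : Set (X2 → ℝ) :=
  {f | IsGamble f ∧ (fun p : X1 × X2 => f p.2) ∈ D}

/-- `marg_1(D|B2)`. -/
def marg1c (D : Set (X1 × X2 → ℝ)) (B2 : Set X2) : Set (X1 → ℝ) :=
  {f | IsGamble f ∧ (fun p : X1 × X2 => f p.1 * ind B2 p.2) ∈ D}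

/-- `marg_2(D|B1)`. -/
def marg2c (D : Set (X1 × X2 → ℝ)) (B1 : Set X1) : Set (X2 → ℝ) :=
  {f | IsGamble f ∧ (fun p : X1 × X2 => f p.2 * ind B1 p.1) ∈ D}

/-- Epistemic independence of a set of desirable gambles on `X1 × X2`. -/
def EpIndSDG (F1 : Set (Set X1)) (F2 : Set (Set X2)) (D : Set (X1 × X2 → ℝ)) : Prop :=
  (∀ B2 ∈ F2, marg1c D B2 = marg1 D) ∧ (∀ B1 ∈ F1, marg2c D B1 = marg2 D)

/-- Independent product (of sets of desirable gambles). -/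
def IndProductSDG (F1 : Set (Set X1)) (F2 : Set (Set X2))
    (D1 : Set (X1 → ℝ)) (D2 : Set (X2 → ℝ)) (D : Set (X1 × X2 → ℝ)) : Prop :=
  CoherentSDG D ∧ EpIndSDG F1 F2 D ∧ marg1 D = D1 ∧ marg2 D = D2

/-- The independent natural extension `lp1 ⊗ lp2` on `C(X1 × X2)`. -/
noncomputable def lpProd (C1 : Set ((X1 → ℝ) × Set X1)) (lp1 : (X1 → ℝ) → Set X1 → EReal)
    (C2 : Set ((X2 → ℝ) × Set X2)) (lp2 : (X2 → ℝ) → Set X2 → EReal)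
    (F1 : Set (Set X1)) (F2 : Set (Set X2)) :
    (X1 × X2 → ℝ) → Set (X1 × X2) → EReal :=
  lpOf (indNatExt (ElpSet C1 lp1) (ElpSet C2 lp2) F1 F2)

/-- An independent domain `C ⊆ C(X1 × X2)`. -/
def IndepDomain (F1 : Set (Set X1)) (F2 : Set (Set X2))
    (C : Set ((X1 × X2 → ℝ) × Set (X1 × X2))) : Prop :=
  (∀ (f1 : X1 → ℝ) (B1 : Set X1), IsGamble f1 → B1.Nonempty → ∀ B2 ∈ F2,
    (((fun p : X1 × X2 => f1 p.1), B1 ×ˢ (Set.univ : Set X2)) ∈ C ↔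
      ((fun p : X1 × X2 => f1 p.1), B1 ×ˢ B2) ∈ C)) ∧
  (∀ (f2 : X2 → ℝ) (B2 : Set X2), IsGamble f2 → B2.Nonempty → ∀ B1 ∈ F1,
    (((fun p : X1 × X2 => f2 p.2), (Set.univ : Set X1) ×ˢ B2) ∈ C ↔
      ((fun p : X1 × X2 => f2 p.2), B1 ×ˢ B2) ∈ C))

/-- Epistemic independence of a conditional lower prevision on a domain `C`. -/
def EpIndLP (F1 : Set (Set X1)) (F2 : Set (Set X2))
    (C : Set ((X1 × X2 → ℝ) × Set (X1 × X2)))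
    (lp : (X1 × X2 → ℝ) → Set (X1 × X2) → EReal) : Prop :=
  (∀ (f1 : X1 → ℝ) (B1 : Set X1), IsGamble f1 → B1.Nonempty →
    ((fun p : X1 × X2 => f1 p.1), B1 ×ˢ (Set.univ : Set X2)) ∈ C → ∀ B2 ∈ F2,
    lp (fun p : X1 × X2 => f1 p.1) (B1 ×ˢ (Set.univ : Set X2)) =
      lp (fun p : X1 × X2 => f1 p.1) (B1 ×ˢ B2)) ∧
  (∀ (f2 : X2 → ℝ) (B2 : Set X2), IsGamble f2 → B2.Nonempty →
    ((fun p : X1 × X2 => f2 p.2), (Set.univ : Set X1) ×ˢ B2) ∈ C → ∀ B1 ∈ F1,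
    lp (fun p : X1 × X2 => f2 p.2) ((Set.univ : Set X1) ×ˢ B2) =
      lp (fun p : X1 × X2 => f2 p.2) (B1 ×ˢ B2))

/-- Independent product of two conditional lower previsions, on the joint domain `C`. -/
def IndProductLP (F1 : Set (Set X1)) (F2 : Set (Set X2))
    (C1 : Set ((X1 → ℝ) × Set X1)) (lp1 : (X1 → ℝ) → Set X1 → EReal)
    (C2 : Set ((X2 → ℝ) × Set X2)) (lp2 : (X2 → ℝ) → Set X2 → EReal)
    (C : Set ((X1 × X2 → ℝ) × Set (X1 × X2)))
    (lp : (X1 × X2 → ℝ) → Set (X1 × X2) → EReal) : Prop :=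
  Coherent C lp ∧ EpIndLP F1 F2 C lp ∧
  (∀ p ∈ C1, lp (fun q : X1 × X2 => p.1 q.1) (p.2 ×ˢ (Set.univ : Set X2)) = lp1 p.1 p.2) ∧
  (∀ p ∈ C2, lp (fun q : X1 × X2 => p.1 q.2) ((Set.univ : Set X1) ×ˢ p.2) = lp2 p.1 p.2)

end Product

/-! Every element of `D1 ⊗ D2` is a positive combination of generators, each involving only
finitely many gambles of `D2`. By a Hahn–Banach separation in `ℝ^T`, coherence of `D2` gives,
for any finite `T ⊆ D2`, a positive linear functional `P` on `X2 → ℝ` that is strictly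
positive on `T`. Applying `P` to the sections `g (x1, ·)` then sends every generator, and hence
every element of `D1 ⊗ D2`, into `D1`. So a nonpositive element of `D1 ⊗ D2` would give a
nonpositive element of `D1`, and `f ⊗ 1_{B2} ∈ D1 ⊗ D2` gives `P(1_{B2}) • f ∈ D1` with
`P(1_{B2}) > 0`. The claims about `marg_2` follow by exchanging the two factors. -/

section Gamble

variable {X : Type*}

lemma ind_nonneg (B : Set X) : 0 ≤ ind B :=
  Set.indicator_nonneg fun _ _ => zero_le_one

lemma ind_of_mem {B : Set X} {x : X} (hx : x ∈ B) : ind B x = 1 :=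
  Set.indicator_of_mem hx 1

lemma isGamble_ind (B : Set X) : IsGamble (ind B) := by
  refine ⟨1, fun x => abs_le.2 ⟨neg_one_lt_zero.le.trans (ind_nonneg B x), ?_⟩⟩
  exact Set.indicator_le_self' (fun _ _ => zero_le_one) x

lemma IsGamble.add {f g : X → ℝ} (hf : IsGamble f) (hg : IsGamble g) : IsGamble (f + g) := by
  obtain ⟨M, hM⟩ := hf
  obtain ⟨K, hK⟩ := hg
  exact ⟨M + K, fun x => (abs_add_le _ _).trans (add_le_add (hM x) (hK x))⟩

lemma IsGamble.mul {f g : X → ℝ} (hf : IsGamble f) (hg : IsGamble g) : IsGamble (f * g) := by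
  obtain ⟨M, hM⟩ := hf
  obtain ⟨K, hK⟩ := hg
  refine ⟨M * K, fun x => ?_⟩
  rw [Pi.mul_apply, abs_mul]
  exact mul_le_mul (hM x) (hK x) (abs_nonneg _) ((abs_nonneg _).trans (hM x))

lemma IsGamble.smul {f : X → ℝ} (hf : IsGamble f) (c : ℝ) : IsGamble (c • f) :=
  IsGamble.mul ⟨|c|, fun _ => le_rfl⟩ hf

lemma IsGamble.comp {Y : Type*} {f : X → ℝ} (hf : IsGamble f) (σ : Y → X) :
    IsGamble (f ∘ σ) := by
  obtain ⟨M, hM⟩ := hf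
  exact ⟨M, fun y => hM (σ y)⟩

end Gamble

namespace CoherentSDG

variable {X : Type*} {D : Set (X → ℝ)}

lemma mem_of_nonneg (hD : CoherentSDG D) {f : X → ℝ} (hf : IsGamble f) (h0 : 0 ≤ f) {x : X}
    (hx : 0 < f x) : f ∈ D :=
  hD.d1 f hf h0 fun h => by simp [h] at hx

lemma ind_mem (hD : CoherentSDG D) {B : Set X} (hB : B.Nonempty) : ind B ∈ D := by
  obtain ⟨x, hx⟩ := hB
  exact hD.mem_of_nonneg (isGamble_ind B) (ind_nonneg B) (x := x) (by simp [ind_of_mem hx])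

lemma sum_smul_mem (hD : CoherentSDG D) {ι : Type*} (s : Finset ι) (c : ι → ℝ)
    (f : ι → X → ℝ) (hc : ∀ i ∈ s, 0 ≤ c i) (hf : ∀ i ∈ s, f i ∈ D) (hpos : ∃ i ∈ s, 0 < c i) :
    ∑ i ∈ s, c i • f i ∈ D := by
  classical
  rw [← Finset.sum_filter_of_ne (p := fun i => 0 < c i) fun i hi hne =>
    (hc i hi).lt_of_ne' fun h => hne (by simp [h])]
  obtain ⟨i, hi, hci⟩ := hpos
  refine Finset.sum_induction_nonempty _ (· ∈ D) (fun a b ha hb => hD.d3 a ha b hb)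
    ⟨i, Finset.mem_filter.2 ⟨hi, hci⟩⟩ fun j hj => ?_
  rw [Finset.mem_filter] at hj
  exact hD.d2 _ (hf j hj.1) _ hj.2

end CoherentSDG

section Posi

variable {X : Type*} {A : Set (X → ℝ)}

lemma subset_posi : A ⊆ posi A := fun f hf =>
  ⟨0, fun _ => 1, fun _ => f, fun _ => one_pos, fun _ => hf, by simp⟩

lemma smul_mem_posi {f : X → ℝ} (hf : f ∈ posi A) {c : ℝ} (hc : 0 < c) : c • f ∈ posi A := by
  obtain ⟨n, l, h, hl, hh, rfl⟩ := hf
  refine ⟨n, fun i => c * l i, h, fun i => mul_pos hc (hl i), hh, ?_⟩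
  simp [Finset.smul_sum, smul_smul]

lemma smul_add_mem_posi {a g : X → ℝ} (ha : a ∈ A) {c : ℝ} (hc : 0 < c) (hg : g ∈ posi A) :
    c • a + g ∈ posi A := by
  obtain ⟨m, l, h, hl, hh, rfl⟩ := hg
  exact ⟨m + 1, Fin.cons c l, Fin.cons a h, Fin.cases hc hl, Fin.cases ha hh,
    by simp [Fin.sum_univ_succ]⟩

lemma add_mem_posi {f g : X → ℝ} (hf : f ∈ posi A) (hg : g ∈ posi A) : f + g ∈ posi A := by
  obtain ⟨n, l, h, hl, hh, rfl⟩ := hf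
  induction n with
  | zero => simpa using smul_add_mem_posi (hh 0) (hl 0) hg
  | succ n ih =>
    rw [Fin.sum_univ_succ, add_assoc]
    exact smul_add_mem_posi (hh 0) (hl 0)
      (ih (fun i => l i.succ) (fun i => h i.succ) (fun i => hl _) fun i => hh _)

@[elab_as_elim]
lemma posi_induction {p : (X → ℝ) → Prop} (mem : ∀ f ∈ A, p f)
    (smul : ∀ f, p f → ∀ c : ℝ, 0 < c → p (c • f)) (add : ∀ f g, p f → p g → p (f + g))
    {g : X → ℝ} (hg : g ∈ posi A) : p g := by
  obtain ⟨n, l, h, hl, hh, rfl⟩ := hg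
  induction n with
  | zero => simpa using smul _ (mem _ (hh 0)) _ (hl 0)
  | succ n ih =>
    rw [Fin.sum_univ_succ]
    exact add _ _ (smul _ (mem _ (hh 0)) _ (hl 0))
      (ih (fun i => l i.succ) (fun i => h i.succ) (fun i => hl _) fun i => hh _)

end Posi

section Separation

lemma nonneg_of_forall_pos_le_mul {a c : ℝ} (h : ∀ t : ℝ, 0 < t → c ≤ t * a) : 0 ≤ a := by
  by_contra! ha
  have key := h ((|c| + 1) / -a) (div_pos (by positivity) (neg_pos.2 ha))
  rw [div_mul_eq_mul_div, div_neg, mul_div_assoc, div_self ha.ne, mul_one] at key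
  linarith [neg_abs_le c]

lemma apply_single_nonpos_of_forall_pos_lt {ι : Type*} [DecidableEq ι]
    (F : (ι → ℝ) →ₗ[ℝ] ℝ) {u : ℝ} (hF : ∀ y, (∀ i, 0 < y i) → F y < u) (i : ι) :
    F (Pi.single i 1) ≤ 0 := by
  refine neg_nonneg.1 (nonneg_of_forall_pos_le_mul (c := F 1 - u) fun t ht => ?_)
  have := hF (1 + t • Pi.single i 1) fun j => by
    by_cases h : j = i <;> simp [h, ht.le, add_pos_of_pos_of_nonneg]
  rw [map_add, map_smul, smul_eq_mul] at this
  linarith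

lemma CoherentSDG.exists_positiveLinearMap_pos {X : Type*} {D : Set (X → ℝ)}
    (hD : CoherentSDG D) (T : Finset (X → ℝ)) (hT : ↑T ⊆ D) :
    ∃ P : (X → ℝ) →ₚ[ℝ] ℝ, ∀ g ∈ T, 0 < P g := by
  classical
  set orthant : Set (T → ℝ) := Set.univ.pi fun _ => Set.Ioi 0
  set K : Set (T → ℝ) := Set.range fun (P : (X → ℝ) →ₚ[ℝ] ℝ) (g : T) => P g
  by_cases hdisj : Disjoint orthant K
  swap
  · obtain ⟨_, hy, P, rfl⟩ := Set.not_disjoint_iff.1 hdisj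
    exact ⟨P, fun g hg => hy ⟨g, hg⟩ (Set.mem_univ _)⟩
  exfalso
  have hK : Convex ℝ K := by
    rintro _ ⟨P, rfl⟩ _ ⟨Q, rfl⟩ a b ha hb -
    refine ⟨.mk₀ (a • P.toLinearMap + b • Q.toLinearMap) fun f hf => ?_, rfl⟩
    simp only [LinearMap.add_apply, LinearMap.smul_apply, PositiveLinearMap.coe_toLinearMap,
      smul_eq_mul]
    exact add_nonneg (mul_nonneg ha (map_nonneg P hf)) (mul_nonneg hb (map_nonneg Q hf))
  obtain ⟨F, u, hF_orthant, hF_K⟩ := geometric_hahn_banach_open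
    (convex_pi fun _ _ => convex_Ioi 0) (isOpen_set_pi Set.finite_univ fun _ _ => isOpen_Ioi)
    hK hdisj
  have hF_pos : ∀ y : T → ℝ, (∀ g, 0 < y g) → F y < u := fun y hy =>
    hF_orthant y fun g _ => hy g
  have hu : u ≤ 0 := (hF_K 0 ⟨0, rfl⟩).trans_eq (map_zero F)
  set lam : T → ℝ := fun g => F (Pi.single g 1)
  have hF : ∀ y, F y = ∑ g, y g * lam g := fun y => by
    conv_lhs => rw [pi_eq_sum_univ' y]
    simp [lam]
  have hF_eval : ∀ x, 0 ≤ ∑ g : T, g.1 x * lam g := by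
    intro x
    refine nonneg_of_forall_pos_le_mul (c := u) fun t ht => ?_
    have := hF_K (fun g => t * g.1 x)
      ⟨.mk₀ (t • LinearMap.proj x) fun f hf => mul_nonneg ht.le (hf x), rfl⟩
    simpa [hF, Finset.mul_sum, mul_assoc] using this
  obtain ⟨g₀, -, hg₀⟩ : ∃ g ∈ Finset.univ, lam g < 0 := by
    refine Finset.exists_lt_of_sum_lt ?_
    simpa [hF] using (hF_pos 1 fun _ => one_pos).trans_le hu
  refine hD.d4 (∑ g : T, (-lam g) • g.1) (fun x => ?_)
    (hD.sum_smul_mem _ _ _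
      (fun g _ => neg_nonneg.2 (apply_single_nonpos_of_forall_pos_lt F.toLinearMap hF_pos g))
      (fun g _ => hT g.2) ⟨g₀, Finset.mem_univ _, neg_pos.2 hg₀⟩)
  simpa [Finset.sum_apply, mul_comm] using hF_eval x

end Separation

section Product

variable {X1 X2 : Type*}

lemma nonempty_of_mem_union_univ {X : Type*} [Nonempty X] {F : Set (Set X)}
    (hF : ∀ A ∈ F, A.Nonempty) {B : Set X} (hB : B ∈ F ∪ {Set.univ}) : B.Nonempty :=
  hB.elim (hF B) fun h => h ▸ Set.univ_nonempty

def mapSections (P : (X2 → ℝ) →ₚ[ℝ] ℝ) : (X1 × X2 → ℝ) →ₗ[ℝ] X1 → ℝ where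
  toFun g x1 := P fun x2 => g (x1, x2)
  map_add' _ _ := funext fun _ => map_add P _ _
  map_smul' _ _ := funext fun _ => map_smul P _ _

lemma mapSections_apply (P : (X2 → ℝ) →ₚ[ℝ] ℝ) (g : X1 × X2 → ℝ) (x1 : X1) :
    mapSections P g x1 = P fun x2 => g (x1, x2) :=
  rfl

lemma mapSections_nonneg (P : (X2 → ℝ) →ₚ[ℝ] ℝ) {g : X1 × X2 → ℝ} (hg : 0 ≤ g) :
    0 ≤ mapSections P g :=
  fun x1 => map_nonneg P fun x2 => hg (x1, x2)

lemma map_const (P : (X2 → ℝ) →ₚ[ℝ] ℝ) (c : ℝ) : P (fun _ => c) = c * P 1 := by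
  rw [← smul_eq_mul, ← map_smul]
  congr 1
  ext
  simp

lemma IsGamble.mapSections {g : X1 × X2 → ℝ} (hg : IsGamble g) (P : (X2 → ℝ) →ₚ[ℝ] ℝ) :
    IsGamble (mapSections P g) := by
  obtain ⟨M, hM⟩ := hg
  refine ⟨M * P 1, fun x1 => abs_le.2 ⟨?_, ?_⟩⟩
  · have := OrderHomClass.mono P fun x2 => (abs_le.1 (hM (x1, x2))).1
    rwa [map_const, neg_mul] at this
  · have := OrderHomClass.mono P fun x2 => (abs_le.1 (hM (x1, x2))).2
    rwa [map_const] at this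

lemma mapSections_mul_ind_left (P : (X2 → ℝ) →ₚ[ℝ] ℝ) (f2 : X2 → ℝ) (B1 : Set X1) :
    mapSections P (fun p => f2 p.2 * ind B1 p.1) = P f2 • ind B1 := by
  funext x1
  simp only [mapSections_apply, Pi.smul_apply, smul_eq_mul, mul_comm _ (ind B1 x1)]
  exact map_smul P (ind B1 x1) f2

lemma mapSections_mul_ind_right (P : (X2 → ℝ) →ₚ[ℝ] ℝ) (f1 : X1 → ℝ) (B2 : Set X2) :
    mapSections P (fun p => f1 p.1 * ind B2 p.2) = P (ind B2) • f1 := by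
  funext x1
  rw [mapSections_apply, Pi.smul_apply, smul_eq_mul, mul_comm]
  exact map_smul P (f1 x1) (ind B2)

end Product

section IndependentNaturalExtension

variable {X1 X2 : Type*} {D1 : Set (X1 → ℝ)} {D2 : Set (X2 → ℝ)}
  {F1 : Set (Set X1)} {F2 : Set (Set X2)}

lemma exists_finset_forall_mapSections_mem [Nonempty X1] [Nonempty X2]
    (hD1 : CoherentSDG D1) (hD2 : CoherentSDG D2)
    (hF1 : ∀ A ∈ F1, A.Nonempty) (hF2 : ∀ A ∈ F2, A.Nonempty)
    {g : X1 × X2 → ℝ} (hg : g ∈ indNatExt D1 D2 F1 F2) :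
    ∃ T : Finset (X2 → ℝ), ↑T ⊆ D2 ∧
      ∀ P : (X2 → ℝ) →ₚ[ℝ] ℝ, (∀ e ∈ T, 0 < P e) → mapSections P g ∈ D1 := by
  classical
  refine posi_induction ?_ ?_ ?_ hg
  · rintro h ((⟨f2, hf2, B1, hB1, rfl⟩ | ⟨f1, hf1, B2, hB2, rfl⟩) | ⟨hgam, h0, hne⟩)
    · refine ⟨{f2}, by simpa using hf2, fun P hP => ?_⟩
      rw [mapSections_mul_ind_left]
      exact hD1.d2 _ (hD1.ind_mem (nonempty_of_mem_union_univ hF1 hB1)) _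
        (hP f2 (Finset.mem_singleton_self _))
    · refine ⟨{ind B2}, by simpa using hD2.ind_mem (nonempty_of_mem_union_univ hF2 hB2),
        fun P hP => ?_⟩
      rw [mapSections_mul_ind_right]
      exact hD1.d2 _ hf1 _ (hP _ (Finset.mem_singleton_self _))
    · obtain ⟨p, hp⟩ := (Pi.lt_def.1 (h0.lt_of_ne' hne)).2
      refine ⟨{fun x2 => h (p.1, x2)}, ?_, fun P hP => ?_⟩
      · rw [Finset.coe_singleton, Set.singleton_subset_iff]
        exact hD2.mem_of_nonneg (hgam.comp _) (fun x2 => h0 (p.1, x2)) (x := p.2) hp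
      · exact hD1.mem_of_nonneg (hgam.mapSections P) (mapSections_nonneg P h0) (x := p.1)
          (hP _ (Finset.mem_singleton_self _))
  · rintro f ⟨T, hT, hf⟩ c hc
    exact ⟨T, hT, fun P hP => by rw [map_smul]; exact hD1.d2 _ (hf P hP) c hc⟩
  · rintro f f' ⟨T, hT, hf⟩ ⟨T', hT', hf'⟩
    refine ⟨T ∪ T', by simpa [Set.union_subset_iff] using ⟨hT, hT'⟩, fun P hP => ?_⟩
    rw [map_add]
    exact hD1.d3 _ (hf P fun e he => hP e (Finset.mem_union_left _ he))
      _ (hf' P fun e he => hP e (Finset.mem_union_right _ he))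

lemma exists_mapSections_mem [Nonempty X1] [Nonempty X2]
    (hD1 : CoherentSDG D1) (hD2 : CoherentSDG D2)
    (hF1 : ∀ A ∈ F1, A.Nonempty) (hF2 : ∀ A ∈ F2, A.Nonempty)
    {g : X1 × X2 → ℝ} (hg : g ∈ indNatExt D1 D2 F1 F2) (S : Finset (X2 → ℝ)) (hS : ↑S ⊆ D2) :
    ∃ P : (X2 → ℝ) →ₚ[ℝ] ℝ, (∀ e ∈ S, 0 < P e) ∧ mapSections P g ∈ D1 := by
  classical
  obtain ⟨T, hT, hgT⟩ := exists_finset_forall_mapSections_mem hD1 hD2 hF1 hF2 hg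
  obtain ⟨P, hP⟩ := hD2.exists_positiveLinearMap_pos (S ∪ T)
    (by simpa [Set.union_subset_iff] using ⟨hS, hT⟩)
  exact ⟨P, fun e he => hP e (Finset.mem_union_left _ he),
    hgT P fun e he => hP e (Finset.mem_union_right _ he)⟩

lemma indNatExt_coherent [Nonempty X1] [Nonempty X2]
    (hD1 : CoherentSDG D1) (hD2 : CoherentSDG D2)
    (hF1 : ∀ A ∈ F1, A.Nonempty) (hF2 : ∀ A ∈ F2, A.Nonempty) :
    CoherentSDG (indNatExt D1 D2 F1 F2) where
  subset_gambles _ hg := by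
    refine posi_induction ?_ (fun _ hf c _ => hf.smul c) (fun _ _ hf hf' => hf.add hf') hg
    rintro h ((⟨f2, hf2, B1, -, rfl⟩ | ⟨f1, hf1, B2, -, rfl⟩) | hpos)
    · exact ((hD2.subset_gambles f2 hf2).comp Prod.snd).mul ((isGamble_ind B1).comp Prod.fst)
    · exact ((hD1.subset_gambles f1 hf1).comp Prod.fst).mul ((isGamble_ind B2).comp Prod.snd)
    · exact hpos.1
  d1 f hf h0 hne := subset_posi (Or.inr ⟨hf, h0, hne⟩)
  d2 _ hf _ hc := smul_mem_posi hf hc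
  d3 _ hf _ hg := add_mem_posi hf hg
  d4 g hle hg := by
    obtain ⟨P, -, hP⟩ := exists_mapSections_mem hD1 hD2 hF1 hF2 hg ∅ (by simp)
    refine hD1.d4 _ ?_ hP
    simpa using mapSections_nonneg P (neg_nonneg.2 hle)

lemma mem_of_mul_ind_mem_indNatExt [Nonempty X1] [Nonempty X2]
    (hD1 : CoherentSDG D1) (hD2 : CoherentSDG D2)
    (hF1 : ∀ A ∈ F1, A.Nonempty) (hF2 : ∀ A ∈ F2, A.Nonempty)
    {B2 : Set X2} (hB2 : B2.Nonempty) {f : X1 → ℝ}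
    (hf : (fun p : X1 × X2 => f p.1 * ind B2 p.2) ∈ indNatExt D1 D2 F1 F2) : f ∈ D1 := by
  obtain ⟨P, hP, hPf⟩ := exists_mapSections_mem hD1 hD2 hF1 hF2 hf {ind B2}
    (by simpa using hD2.ind_mem hB2)
  rw [mapSections_mul_ind_right] at hPf
  have hc := hP _ (Finset.mem_singleton_self _)
  simpa [smul_smul, hc.ne'] using hD1.d2 _ hPf _ (inv_pos.2 hc)

lemma comp_swap_mem_indNatExt {g : X1 × X2 → ℝ} (hg : g ∈ indNatExt D1 D2 F1 F2) :
    g ∘ Prod.swap ∈ indNatExt D2 D1 F2 F1 := by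
  refine posi_induction ?_
    (fun _ hf _ hc => smul_mem_posi hf hc) (fun _ _ hf hf' => add_mem_posi hf hf') hg
  rintro h ((⟨f2, hf2, B1, hB1, rfl⟩ | ⟨f1, hf1, B2, hB2, rfl⟩) | ⟨hgam, h0, hne⟩)
  · exact subset_posi (Or.inl (Or.inr ⟨f2, hf2, B1, hB1, rfl⟩))
  · exact subset_posi (Or.inl (Or.inl ⟨f1, hf1, B2, hB2, rfl⟩))
  · refine subset_posi (Or.inr ⟨hgam.comp _, fun p => h0 _, fun h => hne (funext fun p => ?_)⟩)
    simpa using congrFun h p.swap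

lemma marg1c_indNatExt [Nonempty X1] [Nonempty X2]
    (hD1 : CoherentSDG D1) (hD2 : CoherentSDG D2)
    (hF1 : ∀ A ∈ F1, A.Nonempty) (hF2 : ∀ A ∈ F2, A.Nonempty)
    {B2 : Set X2} (hB2 : B2 ∈ F2 ∪ {Set.univ}) : marg1c (indNatExt D1 D2 F1 F2) B2 = D1 := by
  ext f
  refine ⟨fun hf => ?_, fun hf => ⟨hD1.subset_gambles f hf, ?_⟩⟩
  · exact mem_of_mul_ind_mem_indNatExt hD1 hD2 hF1 hF2 (nonempty_of_mem_union_univ hF2 hB2) hf.2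
  · exact subset_posi (Or.inl (Or.inr ⟨f, hf, B2, hB2, rfl⟩))

lemma marg2c_indNatExt [Nonempty X1] [Nonempty X2]
    (hD1 : CoherentSDG D1) (hD2 : CoherentSDG D2)
    (hF1 : ∀ A ∈ F1, A.Nonempty) (hF2 : ∀ A ∈ F2, A.Nonempty)
    {B1 : Set X1} (hB1 : B1 ∈ F1 ∪ {Set.univ}) : marg2c (indNatExt D1 D2 F1 F2) B1 = D2 := by
  refine (Set.ext fun f => ?_).trans (marg1c_indNatExt hD2 hD1 hF2 hF1 hB1)
  exact and_congr_right fun _ => ⟨comp_swap_mem_indNatExt, comp_swap_mem_indNatExt⟩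

lemma marg1_eq_marg1c_univ (D : Set (X1 × X2 → ℝ)) : marg1 D = marg1c D Set.univ := by
  simp [marg1, marg1c, ind]

lemma marg2_eq_marg2c_univ (D : Set (X1 × X2 → ℝ)) : marg2 D = marg2c D Set.univ := by
  simp [marg2, marg2c, ind]

end IndependentNaturalExtension

/-- Proposition 11: `D1 ⊗ D2` is an independent product of `D1` and
`D2`. -/
theorem stmt9 {X1 X2 : Type*} [Nonempty X1] [Nonempty X2]
    (D1 : Set (X1 → ℝ)) (D2 : Set (X2 → ℝ))
    (hD1 : CoherentSDG D1) (hD2 : CoherentSDG D2)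
    (F1 : Set (Set X1)) (F2 : Set (Set X2))
    (hF1 : ∀ A ∈ F1, A.Nonempty) (hF2 : ∀ A ∈ F2, A.Nonempty) :
    IndProductSDG F1 F2 D1 D2 (indNatExt D1 D2 F1 F2) := by
  have hmarg1 := marg1c_indNatExt hD1 hD2 hF1 hF2 (B2 := Set.univ) (Or.inr rfl)
  have hmarg2 := marg2c_indNatExt hD1 hD2 hF1 hF2 (B1 := Set.univ) (Or.inr rfl)
  rw [← marg1_eq_marg1c_univ] at hmarg1
  rw [← marg2_eq_marg2c_univ] at hmarg2
  refine ⟨indNatExt_coherent hD1 hD2 hF1 hF2, ⟨fun B2 hB2 => ?_, fun B1 hB1 => ?_⟩, hmarg1, hmarg2⟩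
  · rw [hmarg1, marg1c_indNatExt hD1 hD2 hF1 hF2 (Or.inl hB2)]
  · rw [hmarg2, marg2c_indNatExt hD1 hD2 hF1 hF2 (Or.inl hB1)]

end IPaper
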